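/- In the missing data model, let a̲ and b̲ be measurable functions bounded away from 0 and ∞, let â, b̂ be bounded measurable functions, and let L be a closed subspace of L_2(a̲b̲g·dν). Define ã and b̃ by requiring that (ã − â)/a̲ and (b̃ − b̂)/b̲ are the orthogonal projections in L_2(a̲b̲g·dν) of (a − â)/a̲ and (b − b̂)/b̲ onto L, and let Π: Z×Z → ℝ be a symmetric measurable kernel representing the orthogonal projection onto L in L_2(a̲b̲g·dν), i.e. Π(z_1,·) ∈ L for each z_1 and ∫ Π(z_1,z) l(z) (a̲b̲g)(z) dν(z) = l(z_1) for every l ∈ L. Then for every z_1, z_3 ∈ Z: (i) E[ Π(z_1,Z) (A ã(Z) − 1) b̲(Z) ] = 0; (ii) E[ Π(z_1,Z) A (Y − b̃(Z)) a̲(Z) ] = 0; and (iii) E[ Π(z_1,Z) A (a̲b̲)(Z) Π(Z,z_3) ] = Π(z_1,z_3). -/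

import Mathlib

open MeasureTheory

/-!
Conditioning on `Z` replaces `A` by `1 / a(Z)` and `A Y` by `b(Z) / a(Z)`, and the law of `Z`
turns the expectation of a function of `Z` into an integral against `f dν`. After these two
steps each left-hand side is an integral against the weight `a̲ b̲ f / a = a̲ b̲ g`: the inner
product in `L₂(a̲b̲g·dν)` of `K(z₁, ·)` with `-(a - ã)/a̲`, with `(b - b̃)/b̲`, or with `K(z₃, ·)`.
Orthogonality of the two residuals to `L` and the reproducing property of `K` conclude.

Since `a̲ b̲ / a` is bounded above and below, the law of `Z` and `a̲b̲g·dν` dominate each other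
up to constants; so `a̲b̲g·dν` is finite, and the products of its `L₂` functions that occur are
integrable after composition with `Z`.
-/

theorem mul_mul_mul_le_mul_mul_div {x u v a cu cv ε : ℝ} (hx : 0 ≤ x) (hε : 0 ≤ ε)
    (hcu : 0 ≤ cu) (hcv : 0 ≤ cv) (hu : cu ≤ u) (hv : cv ≤ v) (ha : ε ≤ 1 / a) :
    cu * cv * ε * x ≤ u * v * (x / a) := by
  have huv : cu * cv ≤ u * v := mul_le_mul hu hv hcv (hcu.trans hu)
  calc cu * cv * ε * x = (cu * cv) * (ε * x) := by ring
    _ ≤ (u * v) * (1 / a * x) := by gcongr; exact (mul_nonneg hcu hcv).trans huv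
    _ = u * v * (x / a) := by ring

theorem mul_mul_div_le_mul_mul {x u v a Cu Cv : ℝ} (hx : 0 ≤ x) (hu0 : 0 ≤ u) (hv0 : 0 ≤ v)
    (hu : u ≤ Cu) (hv : v ≤ Cv) (ha0 : 0 ≤ 1 / a) (ha1 : 1 / a ≤ 1) :
    u * v * (x / a) ≤ Cu * Cv * x := by
  have huv : u * v ≤ Cu * Cv := mul_le_mul hu hv hv0 (hu0.trans hu)
  calc u * v * (x / a) = (u * v) * (1 / a * x) := by ring
    _ ≤ (Cu * Cv) * (1 * x) := by gcongr; exact (mul_nonneg hu0 hv0).trans huv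
    _ = Cu * Cv * x := by ring

theorem MeasureTheory.MemLp.mul_of_memLp_div_sub {α : Type*} {m : MeasurableSpace α} {μ : Measure α}
    [IsFiniteMeasure μ] {p : ENNReal} {t s u v : α → ℝ}
    (hl : MemLp (fun z => (t z - s z) / u z) p μ) (hs : MemLp s ⊤ μ) (hu : MemLp u ⊤ μ)
    (hv : MemLp v ⊤ μ) (hu0 : ∀ z, u z ≠ 0) :
    MemLp (fun z => t z * v z) p μ := by
  have h : (fun z => t z * v z) = s * v + (u * v) * fun z => (t z - s z) / u z := by
    funext z
    simp only [Pi.add_apply, Pi.mul_apply]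
    field_simp [hu0 z]
    ring
  have hsv : MemLp (s * v) ⊤ μ := hv.mul hs
  have huv : MemLp (u * v) ⊤ μ := hv.mul hu
  rw [h]
  exact (hsv.mono_exponent le_top).add (hl.mul huv)

section

variable {Ω 𝒵 : Type*} {mΩ : MeasurableSpace Ω} [MeasurableSpace 𝒵] {P : Measure Ω}
  {ν : Measure 𝒵} {Z : Ω → 𝒵} {f : 𝒵 → ℝ}

theorem withDensity_ofReal_le_smul_withDensity_ofReal {w : 𝒵 → ℝ} {C : ℝ} (hw : Measurable w)
    (hC : 0 ≤ C) (hfw : ∀ z, f z ≤ C * w z) :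
    (ν.withDensity fun z => ENNReal.ofReal (f z))
      ≤ ENNReal.ofReal C • ν.withDensity fun z => ENNReal.ofReal (w z) := by
  rw [← withDensity_smul _ hw.ennreal_ofReal]
  refine withDensity_mono (ae_of_all _ fun z => ?_)
  simp only [Pi.smul_apply, smul_eq_mul, ← ENNReal.ofReal_mul hC]
  exact ENNReal.ofReal_le_ofReal (hfw z)

theorem MeasureTheory.Integrable.comp_of_map_le_smul {μ : Measure 𝒵} {c : ENNReal} (hc : c ≠ ⊤)
    (hZ : AEMeasurable Z P) (hle : P.map Z ≤ c • μ) {g : 𝒵 → ℝ} (hg : Integrable g μ) :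
    Integrable (fun ω => g (Z ω)) P :=
  have hgZ : Integrable g (P.map Z) := (hg.smul_measure hc).mono_measure hle
  (integrable_map_measure hgZ.aestronglyMeasurable hZ).1 hgZ

theorem isFiniteMeasure_of_le_smul {μ μ' : Measure 𝒵} [IsFiniteMeasure μ'] {c : ENNReal}
    (hc : c ≠ ⊤) (hle : μ ≤ c • μ') : IsFiniteMeasure μ :=
  have := μ'.smul_finite hc
  isFiniteMeasure_of_le _ hle

theorem integral_comp_eq_integral_mul_of_map_eq_withDensity (hZ : Measurable Z)
    (hf : Measurable f) (hf0 : ∀ z, 0 ≤ f z)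
    (hlaw : P.map Z = ν.withDensity fun z => ENNReal.ofReal (f z))
    {c : 𝒵 → ℝ} (hc : Measurable c) :
    ∫ ω, c (Z ω) ∂P = ∫ z, c z * f z ∂ν := by
  rw [← integral_map hZ.aemeasurable hc.aestronglyMeasurable, hlaw,
    integral_withDensity_eq_integral_toReal_smul hf.ennreal_ofReal
      (ae_of_all _ fun _ => ENNReal.ofReal_lt_top)]
  simp_rw [ENNReal.toReal_ofReal (hf0 _), smul_eq_mul, mul_comm]

theorem integral_eq_integral_mul_of_condExp_comap_ae_eq [IsFiniteMeasure P]
    (hZ : Measurable Z) (hf : Measurable f) (hf0 : ∀ z, 0 ≤ f z)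
    (hlaw : P.map Z = ν.withDensity fun z => ENNReal.ofReal (f z))
    {F : Ω → ℝ} {c : 𝒵 → ℝ} (hc : Measurable c)
    (hF : P[F|MeasurableSpace.comap Z inferInstance] =ᵐ[P] fun ω => c (Z ω)) :
    ∫ ω, F ω ∂P = ∫ z, c z * f z ∂ν := by
  rw [← integral_condExp hZ.comap_le, integral_congr_ae hF,
    integral_comp_eq_integral_mul_of_map_eq_withDensity hZ hf hf0 hlaw hc]

theorem condExp_mul_comp_ae_eq [IsFiniteMeasure P]
    {X : Ω → ℝ} {C : ℝ} (hX : AEStronglyMeasurable X P) (hXC : ∀ᵐ ω ∂P, ‖X ω‖ ≤ C)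
    {c g : 𝒵 → ℝ} (hXc : P[X|MeasurableSpace.comap Z inferInstance] =ᵐ[P] fun ω => c (Z ω))
    (hg : Measurable g) (hgZ : Integrable (fun ω => g (Z ω)) P) :
    P[fun ω => X ω * g (Z ω)|MeasurableSpace.comap Z inferInstance]
      =ᵐ[P] fun ω => c (Z ω) * g (Z ω) := by
  have hgZm : StronglyMeasurable[MeasurableSpace.comap Z inferInstance] fun ω => g (Z ω) :=
    (hg.comp (comap_measurable Z)).stronglyMeasurable
  have hXi : Integrable X P := (integrable_const C).mono' hX hXC
  exact (condExp_mul_of_stronglyMeasurable_right hgZm (hgZ.bdd_mul hX hXC) hXi).trans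
    (hXc.mul Filter.EventuallyEq.rfl)

variable {A Y : Ω → ℝ} {a abar bbar k : 𝒵 → ℝ}

theorem integral_mul_propensity_residual_eq [IsFiniteMeasure P] (hZ : Measurable Z)
    (hf : Measurable f) (hf0 : ∀ z, 0 ≤ f z)
    (hlaw : P.map Z = ν.withDensity fun z => ENNReal.ofReal (f z))
    (hA : AEStronglyMeasurable A P) (hA1 : ∀ ω, ‖A ω‖ ≤ 1)
    (hcondA : P[A|MeasurableSpace.comap Z inferInstance] =ᵐ[P] fun ω => 1 / a (Z ω))
    (ha : Measurable a) (ha0 : ∀ z, a z ≠ 0) (habar0 : ∀ z, abar z ≠ 0)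
    {atil : 𝒵 → ℝ} (hk : Measurable k) (hatil : Measurable atil) (hbbar : Measurable bbar)
    (h1 : Integrable (fun ω => k (Z ω) * (atil (Z ω) * bbar (Z ω))) P)
    (h2 : Integrable (fun ω => k (Z ω) * bbar (Z ω)) P) :
    ∫ ω, k (Z ω) * (A ω * atil (Z ω) - 1) * bbar (Z ω) ∂P
      = -∫ z, ((a z - atil z) / abar z) * k z * (abar z * bbar z * (f z / a z)) ∂ν := by
  have hg1 : Measurable fun z => k z * (atil z * bbar z) := by fun_prop
  have hg2 : StronglyMeasurable[MeasurableSpace.comap Z inferInstance]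
      fun ω => k (Z ω) * bbar (Z ω) :=
    ((hk.mul hbbar).comp (comap_measurable Z)).stronglyMeasurable
  have hF : P[fun ω => A ω * (k (Z ω) * (atil (Z ω) * bbar (Z ω))) - k (Z ω) * bbar (Z ω)|
      MeasurableSpace.comap Z inferInstance]
      =ᵐ[P] fun ω => 1 / a (Z ω) * (k (Z ω) * (atil (Z ω) * bbar (Z ω)))
        - k (Z ω) * bbar (Z ω) := by
    refine (condExp_sub (h1.bdd_mul hA (ae_of_all _ hA1)) h2 _).trans ?_
    rw [condExp_of_stronglyMeasurable hZ.comap_le hg2 h2]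
    exact (condExp_mul_comp_ae_eq (c := fun z => 1 / a z) hA (ae_of_all _ hA1) hcondA hg1
      h1).sub Filter.EventuallyEq.rfl
  calc _ = ∫ ω, (A ω * (k (Z ω) * (atil (Z ω) * bbar (Z ω))) - k (Z ω) * bbar (Z ω)) ∂P := by
        congr 1; funext ω; ring
    _ = ∫ z, (1 / a z * (k z * (atil z * bbar z)) - k z * bbar z) * f z ∂ν :=
        integral_eq_integral_mul_of_condExp_comap_ae_eq hZ hf hf0 hlaw (by fun_prop) hF
    _ = _ := by
        rw [← integral_neg]; congr 1; funext z; field_simp [ha0 z, habar0 z]; ring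

theorem integral_mul_outcome_residual_eq [IsFiniteMeasure P] (hZ : Measurable Z)
    (hf : Measurable f) (hf0 : ∀ z, 0 ≤ f z)
    (hlaw : P.map Z = ν.withDensity fun z => ENNReal.ofReal (f z))
    (hA : AEStronglyMeasurable A P) (hA1 : ∀ ω, ‖A ω‖ ≤ 1)
    (hAY : AEStronglyMeasurable (fun ω => A ω * Y ω) P) (hAY1 : ∀ ω, ‖A ω * Y ω‖ ≤ 1)
    (hcondA : P[A|MeasurableSpace.comap Z inferInstance] =ᵐ[P] fun ω => 1 / a (Z ω))
    {b : 𝒵 → ℝ} (hcondAY : P[fun ω => A ω * Y ω|MeasurableSpace.comap Z inferInstance]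
      =ᵐ[P] fun ω => b (Z ω) / a (Z ω))
    (ha : Measurable a) (hb : Measurable b) (hbbar0 : ∀ z, bbar z ≠ 0)
    {btil : 𝒵 → ℝ} (hk : Measurable k) (hbtil : Measurable btil) (habar : Measurable abar)
    (h1 : Integrable (fun ω => k (Z ω) * abar (Z ω)) P)
    (h2 : Integrable (fun ω => k (Z ω) * (btil (Z ω) * abar (Z ω))) P) :
    ∫ ω, k (Z ω) * (A ω * (Y ω - btil (Z ω))) * abar (Z ω) ∂P
      = ∫ z, ((b z - btil z) / bbar z) * k z * (abar z * bbar z * (f z / a z)) ∂ν := by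
  have hF : P[fun ω => A ω * Y ω * (k (Z ω) * abar (Z ω))
      - A ω * (k (Z ω) * (btil (Z ω) * abar (Z ω)))|MeasurableSpace.comap Z inferInstance]
      =ᵐ[P] fun ω => b (Z ω) / a (Z ω) * (k (Z ω) * abar (Z ω))
        - 1 / a (Z ω) * (k (Z ω) * (btil (Z ω) * abar (Z ω))) :=
    (condExp_sub (h1.bdd_mul hAY (ae_of_all _ hAY1)) (h2.bdd_mul hA (ae_of_all _ hA1)) _).trans
      ((condExp_mul_comp_ae_eq (c := fun z => b z / a z) (g := fun z => k z * abar z)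
        hAY (ae_of_all _ hAY1) hcondAY (by fun_prop) h1).sub
      (condExp_mul_comp_ae_eq (c := fun z => 1 / a z) (g := fun z => k z * (btil z * abar z))
        hA (ae_of_all _ hA1) hcondA (by fun_prop) h2))
  calc _ = ∫ ω, (A ω * Y ω * (k (Z ω) * abar (Z ω))
        - A ω * (k (Z ω) * (btil (Z ω) * abar (Z ω)))) ∂P := by
        congr 1; funext ω; ring
    _ = ∫ z, (b z / a z * (k z * abar z) - 1 / a z * (k z * (btil z * abar z))) * f z ∂ν :=
        integral_eq_integral_mul_of_condExp_comap_ae_eq hZ hf hf0 hlaw (by fun_prop) hF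
    _ = _ := by
        congr 1; funext z; field_simp [hbbar0 z]

theorem integral_mul_weight_mul_eq [IsFiniteMeasure P] (hZ : Measurable Z)
    (hf : Measurable f) (hf0 : ∀ z, 0 ≤ f z)
    (hlaw : P.map Z = ν.withDensity fun z => ENNReal.ofReal (f z))
    (hA : AEStronglyMeasurable A P) (hA1 : ∀ ω, ‖A ω‖ ≤ 1)
    (hcondA : P[A|MeasurableSpace.comap Z inferInstance] =ᵐ[P] fun ω => 1 / a (Z ω))
    (ha : Measurable a) {k' : 𝒵 → ℝ} (hk : Measurable k) (hk' : Measurable k')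
    (habar : Measurable abar) (hbbar : Measurable bbar)
    (h : Integrable (fun ω => k (Z ω) * (abar (Z ω) * bbar (Z ω) * k' (Z ω))) P) :
    ∫ ω, k (Z ω) * A ω * (abar (Z ω) * bbar (Z ω)) * k' (Z ω) ∂P
      = ∫ z, k z * k' z * (abar z * bbar z * (f z / a z)) ∂ν := by
  have hF := condExp_mul_comp_ae_eq (c := fun z => 1 / a z)
    (g := fun z => k z * (abar z * bbar z * k' z)) hA (ae_of_all _ hA1) hcondA (by fun_prop) h
  calc _ = ∫ ω, A ω * (k (Z ω) * (abar (Z ω) * bbar (Z ω) * k' (Z ω))) ∂P := by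
        congr 1; funext ω; ring
    _ = ∫ z, 1 / a z * (k z * (abar z * bbar z * k' z)) * f z ∂ν :=
        integral_eq_integral_mul_of_condExp_comap_ae_eq hZ hf hf0 hlaw (by fun_prop) hF
    _ = _ := by
        congr 1; funext z; ring

theorem map_le_smul_withDensity_weight
    (hlaw : P.map Z = ν.withDensity fun z => ENNReal.ofReal (f z))
    (hf : Measurable f) (hf0 : ∀ z, 0 ≤ f z) (ha : Measurable a) (habar : Measurable abar)
    (hbbar : Measurable bbar) {ε ca cb : ℝ} (hε : 0 < ε) (hca : 0 < ca) (hcb : 0 < cb)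
    (haε : ∀ z, ε ≤ 1 / a z) (habar_ge : ∀ z, ca ≤ abar z) (hbbar_ge : ∀ z, cb ≤ bbar z) :
    P.map Z ≤ ENNReal.ofReal (ca * cb * ε)⁻¹
      • ν.withDensity fun z => ENNReal.ofReal (abar z * bbar z * (f z / a z)) := by
  rw [hlaw]
  refine withDensity_ofReal_le_smul_withDensity_ofReal (by fun_prop) (by positivity)
    fun z => (le_inv_mul_iff₀ (by positivity)).2 ?_
  exact mul_mul_mul_le_mul_mul_div (hf0 z) hε.le hca.le hcb.le (habar_ge z) (hbbar_ge z) (haε z)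

theorem withDensity_weight_le_smul_map
    (hlaw : P.map Z = ν.withDensity fun z => ENNReal.ofReal (f z))
    (hf : Measurable f) (hf0 : ∀ z, 0 ≤ f z) {Ca Cb : ℝ} (hCa : 0 ≤ Ca) (hCb : 0 ≤ Cb)
    (ha0 : ∀ z, 0 ≤ 1 / a z) (ha1 : ∀ z, 1 / a z ≤ 1) (habar0 : ∀ z, 0 ≤ abar z)
    (habar_le : ∀ z, abar z ≤ Ca) (hbbar0 : ∀ z, 0 ≤ bbar z) (hbbar_le : ∀ z, bbar z ≤ Cb) :
    (ν.withDensity fun z => ENNReal.ofReal (abar z * bbar z * (f z / a z)))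
      ≤ ENNReal.ofReal (Ca * Cb) • P.map Z := by
  rw [hlaw]
  exact withDensity_ofReal_le_smul_withDensity_ofReal hf (mul_nonneg hCa hCb) fun z =>
    mul_mul_div_le_mul_mul (hf0 z) (habar0 z) (hbbar0 z) (habar_le z) (hbbar_le z) (ha0 z) (ha1 z)

end

theorem missing_data_degeneracy_identities_general
    {Ω 𝒵 : Type*} [MeasurableSpace Ω] [MeasurableSpace 𝒵]
    (P : Measure Ω) [IsProbabilityMeasure P]
    (ν : Measure 𝒵)
    (Z : Ω → 𝒵) (A Y : Ω → ℝ)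
    (hZ : Measurable Z) (hAm : Measurable A) (hYm : Measurable Y)
    (hA01 : ∀ ω, A ω = 0 ∨ A ω = 1) (hY01 : ∀ ω, Y ω = 0 ∨ Y ω = 1)
    (a b f : 𝒵 → ℝ) (ham : Measurable a) (hbm : Measurable b) (hfm : Measurable f)
    (hf0 : ∀ z, 0 ≤ f z)
    (ε : ℝ) (hε : 0 < ε)
    (ha : ∀ z, ε ≤ 1 / a z ∧ 1 / a z ≤ 1 - ε)
    (hlaw : Measure.map Z P = ν.withDensity fun z => ENNReal.ofReal (f z))
    (hcondA : P[A|MeasurableSpace.comap Z inferInstance]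
        =ᵐ[P] fun ω => 1 / a (Z ω))
    (hcondAY : P[fun ω => A ω * Y ω|MeasurableSpace.comap Z inferInstance]
        =ᵐ[P] fun ω => b (Z ω) / a (Z ω))
    (abar bbar ahat bhat atil btil : 𝒵 → ℝ)
    (habarm : Measurable abar) (hbbarm : Measurable bbar)
    (hahatm : Measurable ahat) (hbhatm : Measurable bhat)
    (hatilm : Measurable atil) (hbtilm : Measurable btil)
    (habar : ∃ c C : ℝ, 0 < c ∧ ∀ z, c ≤ abar z ∧ abar z ≤ C)
    (hbbar : ∃ c C : ℝ, 0 < c ∧ ∀ z, c ≤ bbar z ∧ bbar z ≤ C)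
    (M : ℝ) (hahatb : ∀ z, |ahat z| ≤ M) (hbhatb : ∀ z, |bhat z| ≤ M)
    (μbar : Measure 𝒵)
    (hμbar : μbar = ν.withDensity fun z =>
      ENNReal.ofReal (abar z * bbar z * (f z / a z)))
    (L : Submodule ℝ (𝒵 → ℝ)) (hL : ∀ l ∈ L, MemLp l 2 μbar)
    (hatilL : (fun z => (atil z - ahat z) / abar z) ∈ L)
    (hbtilL : (fun z => (btil z - bhat z) / bbar z) ∈ L)
    (haorth : ∀ l ∈ L,
      ∫ z, ((a z - atil z) / abar z) * l z * (abar z * bbar z * (f z / a z)) ∂ν = 0)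
    (hborth : ∀ l ∈ L,
      ∫ z, ((b z - btil z) / bbar z) * l z * (abar z * bbar z * (f z / a z)) ∂ν = 0)
    (K : 𝒵 → 𝒵 → ℝ) (hKm : Measurable (Function.uncurry K))
    (hKsym : ∀ z₁ z₂, K z₁ z₂ = K z₂ z₁)
    (hKL : ∀ z₁, (fun z => K z₁ z) ∈ L)
    (hKrep : ∀ l ∈ L, ∀ z₁,
      ∫ z, K z₁ z * l z * (abar z * bbar z * (f z / a z)) ∂ν = l z₁) :
    ∀ z₁ z₃ : 𝒵,
      (∫ ω, K z₁ (Z ω) * (A ω * atil (Z ω) - 1) * bbar (Z ω) ∂P = 0)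
      ∧ (∫ ω, K z₁ (Z ω) * (A ω * (Y ω - btil (Z ω))) * abar (Z ω) ∂P = 0)
      ∧ (∫ ω, K z₁ (Z ω) * A ω * (abar (Z ω) * bbar (Z ω)) * K (Z ω) z₃ ∂P
          = K z₁ z₃) := by
  intro z₁ z₃
  obtain ⟨ca, Ca, hca, habar⟩ := habar
  obtain ⟨cb, Cb, hcb, hbbar⟩ := hbbar
  have ha0 : ∀ z, 0 < 1 / a z := fun z => hε.trans_le (ha z).1
  have habar0 : ∀ z, 0 < abar z := fun z => hca.trans_le (habar z).1
  have hbbar0 : ∀ z, 0 < bbar z := fun z => hcb.trans_le (hbbar z).1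
  have hmap : P.map Z ≤ ENNReal.ofReal (ca * cb * ε)⁻¹ • μbar := hμbar ▸
    map_le_smul_withDensity_weight hlaw hfm hf0 ham habarm hbbarm hε hca hcb (fun z => (ha z).1)
      (fun z => (habar z).1) (fun z => (hbbar z).1)
  have : IsFiniteMeasure μbar := isFiniteMeasure_of_le_smul ENNReal.ofReal_ne_top <| hμbar ▸
    withDensity_weight_le_smul_map hlaw hfm hf0 ((habar0 z₁).le.trans (habar z₁).2)
      ((hbbar0 z₁).le.trans (hbbar z₁).2) (fun z => (ha0 z).le)
      (fun z => (ha z).2.trans (by linarith)) (fun z => (habar0 z).le) (fun z => (habar z).2)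
      (fun z => (hbbar0 z).le) (fun z => (hbbar z).2)
  have hbdd : ∀ {u : 𝒵 → ℝ} {C : ℝ}, Measurable u → (∀ z, ‖u z‖ ≤ C) → MemLp u ⊤ μbar :=
    fun hu hC => memLp_top_of_bound hu.aestronglyMeasurable _ (ae_of_all _ hC)
  have habarL : MemLp abar ⊤ μbar :=
    hbdd habarm fun z => (abs_of_pos (habar0 z)).trans_le (habar z).2
  have hbbarL : MemLp bbar ⊤ μbar :=
    hbdd hbbarm fun z => (abs_of_pos (hbbar0 z)).trans_le (hbbar z).2
  have hK : ∀ z, MemLp (K z) 2 μbar := fun z => hL _ (hKL z)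
  have hK₁Z : ∀ {u : 𝒵 → ℝ}, MemLp u 2 μbar → Integrable (fun ω => K z₁ (Z ω) * u (Z ω)) P :=
    fun hu => ((hK z₁).integrable_mul hu).comp_of_map_le_smul ENNReal.ofReal_ne_top
      hZ.aemeasurable hmap
  have hA1 : ∀ ω, ‖A ω‖ ≤ 1 := fun ω => by rcases hA01 ω with h | h <;> simp [h]
  have hAY1 : ∀ ω, ‖A ω * Y ω‖ ≤ 1 := fun ω => by
    rcases hA01 ω with h | h <;> rcases hY01 ω with h' | h' <;> simp [h, h']
  have hK₁ : Measurable (K z₁) := hKm.of_uncurry_left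
  refine ⟨?_, ?_, ?_⟩
  · rw [integral_mul_propensity_residual_eq hZ hfm hf0 hlaw hAm.aestronglyMeasurable hA1 hcondA
      ham (fun z => (one_div_pos.1 (ha0 z)).ne') (fun z => (habar0 z).ne') hK₁ hatilm hbbarm
      (hK₁Z (MemLp.mul_of_memLp_div_sub (hL _ hatilL) (hbdd hahatm hahatb) habarL hbbarL
        fun z => (habar0 z).ne'))
      (hK₁Z (hbbarL.mono_exponent le_top)), haorth _ (hKL z₁), neg_zero]
  · rw [integral_mul_outcome_residual_eq hZ hfm hf0 hlaw hAm.aestronglyMeasurable hA1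
      (hAm.mul hYm).aestronglyMeasurable hAY1 hcondA hcondAY ham hbm (fun z => (hbbar0 z).ne')
      hK₁ hbtilm habarm (hK₁Z (habarL.mono_exponent le_top))
      (hK₁Z (MemLp.mul_of_memLp_div_sub (hL _ hbtilL) (hbdd hbhatm hbhatb) hbbarL habarL
        fun z => (hbbar0 z).ne')), hborth _ (hKL z₁)]
  · have habbar : MemLp (abar * bbar) ⊤ μbar := hbbarL.mul habarL
    simp only [hKsym _ z₃]
    rw [integral_mul_weight_mul_eq hZ hfm hf0 hlaw hAm.aestronglyMeasurable hA1 hcondA ham hK₁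
      hKm.of_uncurry_left habarm hbbarm (hK₁Z ((hK z₃).mul (r := 2) habbar)),
      hKrep _ (hKL z₃), hKsym]

/-- **Lemma (degeneracy identities in the missing data model).**
With `(ã − â)/a̲` and `(b̃ − b̂)/b̲` the orthogonal projections in `L₂(a̲b̲g·dν)` of
`(a − â)/a̲` and `(b − b̂)/b̲` onto a closed subspace `L`, and `K` a symmetric kernel
representing this projection (`K(z₁,·) ∈ L`, `∫ K(z₁,z) l(z) (a̲b̲g)(z) dν = l(z₁)` for
`l ∈ L`), one has for all `z₁, z₃`:
(i) `E[K(z₁,Z)(A ã(Z) − 1) b̲(Z)] = 0`;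
(ii) `E[K(z₁,Z) A (Y − b̃(Z)) a̲(Z)] = 0`;
(iii) `E[K(z₁,Z) A (a̲b̲)(Z) K(Z,z₃)] = K(z₁,z₃)`. -/
theorem missing_data_degeneracy_identities
    {Ω 𝒵 : Type*} [MeasurableSpace Ω] [MeasurableSpace 𝒵]
    (P : Measure Ω) [IsProbabilityMeasure P]
    (ν : Measure 𝒵) [SigmaFinite ν]
    (Z : Ω → 𝒵) (A Y : Ω → ℝ)
    (hZ : Measurable Z) (hAm : Measurable A) (hYm : Measurable Y)
    (hA01 : ∀ ω, A ω = 0 ∨ A ω = 1) (hY01 : ∀ ω, Y ω = 0 ∨ Y ω = 1)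
    (a b f : 𝒵 → ℝ) (ham : Measurable a) (hbm : Measurable b) (hfm : Measurable f)
    (hf0 : ∀ z, 0 ≤ f z)
    (ε : ℝ) (hε : 0 < ε)
    (ha : ∀ z, ε ≤ 1 / a z ∧ 1 / a z ≤ 1 - ε)
    (hb : ∀ z, ε ≤ b z ∧ b z ≤ 1 - ε)
    (hlaw : Measure.map Z P = ν.withDensity fun z => ENNReal.ofReal (f z))
    (hcondA : P[A|MeasurableSpace.comap Z inferInstance]
        =ᵐ[P] fun ω => 1 / a (Z ω))
    (hcondY : P[Y|MeasurableSpace.comap Z inferInstance]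
        =ᵐ[P] fun ω => b (Z ω))
    (hcondAY : P[fun ω => A ω * Y ω|MeasurableSpace.comap Z inferInstance]
        =ᵐ[P] fun ω => b (Z ω) / a (Z ω))
    (abar bbar ahat bhat atil btil : 𝒵 → ℝ)
    (habarm : Measurable abar) (hbbarm : Measurable bbar)
    (hahatm : Measurable ahat) (hbhatm : Measurable bhat)
    (hatilm : Measurable atil) (hbtilm : Measurable btil)
    (habar : ∃ c C : ℝ, 0 < c ∧ ∀ z, c ≤ abar z ∧ abar z ≤ C)
    (hbbar : ∃ c C : ℝ, 0 < c ∧ ∀ z, c ≤ bbar z ∧ bbar z ≤ C)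
    (M : ℝ) (hahatb : ∀ z, |ahat z| ≤ M) (hbhatb : ∀ z, |bhat z| ≤ M)
    (μbar : Measure 𝒵)
    (hμbar : μbar = ν.withDensity fun z =>
      ENNReal.ofReal (abar z * bbar z * (f z / a z)))
    (L : Submodule ℝ (𝒵 → ℝ)) (hL : ∀ l ∈ L, MemLp l 2 μbar)
    (hamem : MemLp (fun z => (a z - ahat z) / abar z) 2 μbar)
    (hbmem : MemLp (fun z => (b z - bhat z) / bbar z) 2 μbar)
    (hatilL : (fun z => (atil z - ahat z) / abar z) ∈ L)
    (hbtilL : (fun z => (btil z - bhat z) / bbar z) ∈ L)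
    (haorth : ∀ l ∈ L,
      ∫ z, ((a z - atil z) / abar z) * l z * (abar z * bbar z * (f z / a z)) ∂ν = 0)
    (hborth : ∀ l ∈ L,
      ∫ z, ((b z - btil z) / bbar z) * l z * (abar z * bbar z * (f z / a z)) ∂ν = 0)
    (K : 𝒵 → 𝒵 → ℝ) (hKm : Measurable (Function.uncurry K))
    (hKsym : ∀ z₁ z₂, K z₁ z₂ = K z₂ z₁)
    (hKL : ∀ z₁, (fun z => K z₁ z) ∈ L)
    (hKrep : ∀ l ∈ L, ∀ z₁,
      ∫ z, K z₁ z * l z * (abar z * bbar z * (f z / a z)) ∂ν = l z₁) :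
    ∀ z₁ z₃ : 𝒵,
      (∫ ω, K z₁ (Z ω) * (A ω * atil (Z ω) - 1) * bbar (Z ω) ∂P = 0)
      ∧ (∫ ω, K z₁ (Z ω) * (A ω * (Y ω - btil (Z ω))) * abar (Z ω) ∂P = 0)
      ∧ (∫ ω, K z₁ (Z ω) * A ω * (abar (Z ω) * bbar (Z ω)) * K (Z ω) z₃ ∂P
          = K z₁ z₃) :=
  missing_data_degeneracy_identities_general P ν Z A Y hZ hAm hYm hA01 hY01 a b f ham hbm hfm hf0 ε
    hε ha hlaw hcondA hcondAY abar bbar ahat bhat atil btil habarm hbbarm hahatm hbhatm hatilm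
    hbtilm habar hbbar M hahatb hbhatb μbar hμbar L hL hatilL hbtilL haorth hborth K hKm hKsym hKL
    hKrep
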